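/- arXiv:2203.16889 — 2 statements merged into one kernel-verified Lean document; each statement's English description precedes it below -/
import Mathlib

section
/- Let Ω ⊆ ℂ³ be open and let r : Ω → ℂ be holomorphic in all three variables (z, s, E) with r(z,s,E)² = Q(z,s,E) := z⁴ + s·z² + 2z + E and r ≠ 0 on Ω. Define the WKB correction term S₁ := (4·Q·∂²_z Q − 5·(∂_z Q)²)/(32·Q²·r) (i.e. S₁ = (4QQ'' − 5(Q')²)/(32·Q^{5/2}) with the branch Q^{1/2} = r). Then at every point of Ω: S₁ = −∂_s∂_E r − (s/6)·∂²_E r − (5/24)·∂²_z (1/r). Consequently the period of S₁ along any closed z-contour equals (−∂²/∂s∂E − (s/6)·∂²/∂E²) applied to the corresponding period of √Q. -/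
/-- Partial derivative in the first (z) variable. -/
noncomputable def pz (f : ℂ × ℂ × ℂ → ℂ) : ℂ × ℂ × ℂ → ℂ :=
  fun p => deriv (fun z => f (z, p.2.1, p.2.2)) p.1

/-- Partial derivative in the second (s) variable. -/
noncomputable def ps (f : ℂ × ℂ × ℂ → ℂ) : ℂ × ℂ × ℂ → ℂ :=
  fun p => deriv (fun s => f (p.1, s, p.2.2)) p.2.1

/-- Partial derivative in the third (E) variable. -/
noncomputable def pE (f : ℂ × ℂ × ℂ → ℂ) : ℂ × ℂ × ℂ → ℂ :=
  fun p => deriv (fun e => f (p.1, p.2.1, e)) p.2.2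

/-! Differentiating `r ^ 2 = Q` along a coordinate line gives `∂r = ∂Q / (2r)`, so every
derivative of a power of `r` is again a power of `r` with a polynomial coefficient:
`∂_E r = r⁻¹ / 2` and `∂_z (r⁻¹) = -Q_z r⁻³ / 2`. Differentiating once more writes
`∂_s∂_E r`, `∂²_E r` and `∂²_z (1/r)` as combinations of `r⁻³` and `r⁻⁵`; after substituting
`Q = r ^ 2` both sides are such combinations, and their `r⁻³` coefficients agree because
`Q_zz = 12 z ^ 2 + 2 s`. -/

open Filter Set Topology

section LineDerivatives

variable {𝕜 : Type*} [NontriviallyNormedField 𝕜]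

theorem hasDerivAt_of_sq_eventuallyEq [NeZero (2 : 𝕜)] {f q : 𝕜 → 𝕜} {q' x : 𝕜}
    (hf : DifferentiableAt 𝕜 f x) (hsq : (fun y => f y ^ 2) =ᶠ[𝓝 x] q)
    (hq : HasDerivAt q q' x) (hx : f x ≠ 0) :
    HasDerivAt f (q' / (2 * f x)) x := by
  have hsq' : HasDerivAt (fun y => f y ^ 2) (2 * f x * deriv f x) x := by
    simpa [mul_comm] using hf.hasDerivAt.fun_pow 2
  have hderiv : deriv f x = q' / (2 * f x) := by
    rw [eq_div_iff (mul_ne_zero two_ne_zero hx), mul_comm]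
    exact hsq'.unique (hq.congr_of_eventuallyEq hsq)
  exact hderiv ▸ hf.hasDerivAt

theorem deriv_comp_congr_of_eqOn {E F : Type*} [TopologicalSpace E] [NormedAddCommGroup F]
    [NormedSpace 𝕜 F] {Ω : Set E} {ι : 𝕜 → E} {t : 𝕜} {f g : E → F} (hΩ : IsOpen Ω)
    (hfg : EqOn f g Ω) (hι : ContinuousAt ι t) (ht : ι t ∈ Ω) :
    deriv (fun w => f (ι w)) t = deriv (fun w => g (ι w)) t :=
  EventuallyEq.deriv_eq <|
    eventually_of_mem (hι.preimage_mem_nhds (hΩ.mem_nhds ht)) fun _ hw => hfg hw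

theorem hasDerivAt_zpow_comp_of_sq_eq [NeZero (2 : 𝕜)] {E : Type*} [NormedAddCommGroup E]
    [NormedSpace 𝕜 E] {Ω : Set E} {ι : 𝕜 → E} {t : 𝕜} {r q : E → 𝕜} {q' : 𝕜}
    (hΩ : IsOpen Ω) (hr : DifferentiableOn 𝕜 r Ω) (hsq : ∀ p ∈ Ω, r p ^ 2 = q p)
    (hι : DifferentiableAt 𝕜 ι t) (ht : ι t ∈ Ω) (hr0 : r (ι t) ≠ 0)
    (hq : HasDerivAt (fun w => q (ι w)) q' t) (n : ℤ) :
    HasDerivAt (fun w => r (ι w) ^ n) (n / 2 * q' * r (ι t) ^ (n - 2)) t := by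
  have hline : HasDerivAt (fun w => r (ι w)) (q' / (2 * r (ι t))) t := by
    refine hasDerivAt_of_sq_eventuallyEq
      ((hr.differentiableAt (hΩ.mem_nhds ht)).comp t hι) ?_ hq hr0
    exact eventually_of_mem (hι.continuousAt.preimage_mem_nhds (hΩ.mem_nhds ht))
      fun w hw => hsq _ hw
  refine ((hasDerivAt_zpow n _ (Or.inl hr0)).comp t hline).congr_deriv ?_
  rw [show n - 1 = n - 2 + 1 by ring, zpow_add_one₀ hr0]
  field_simp

end LineDerivatives

def quartic (p : ℂ × ℂ × ℂ) : ℂ := p.1 ^ 4 + p.2.1 * p.1 ^ 2 + 2 * p.1 + p.2.2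

section Quartic

variable (z s E : ℂ)

theorem hasDerivAt_quartic_z :
    HasDerivAt (fun w => quartic (w, s, E)) (4 * z ^ 3 + 2 * s * z + 2) z := by
  refine ((((hasDerivAt_pow 4 z).add ((hasDerivAt_pow 2 z).const_mul s)).add
    ((hasDerivAt_id z).const_mul 2)).add_const E).congr_deriv ?_
  push_cast
  ring

theorem hasDerivAt_quartic_s : HasDerivAt (fun w => quartic (z, w, E)) (z ^ 2) s :=
  ((((hasDerivAt_id' s).mul_const (z ^ 2)).const_add (z ^ 4)).add_const (2 * z)).add_const E
    |>.congr_deriv (one_mul _)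

theorem hasDerivAt_quartic_E : HasDerivAt (fun w => quartic (z, s, w)) 1 E :=
  (hasDerivAt_id' E).const_add (z ^ 4 + s * z ^ 2 + 2 * z)

theorem pz_quartic : pz quartic (z, s, E) = 4 * z ^ 3 + 2 * s * z + 2 :=
  (hasDerivAt_quartic_z z s E).deriv

theorem hasDerivAt_pz_quartic_z :
    HasDerivAt (fun w => pz quartic (w, s, E)) (12 * z ^ 2 + 2 * s) z := by
  simp only [pz_quartic]
  refine ((((hasDerivAt_pow 3 z).const_mul 4).add
    ((hasDerivAt_id' z).const_mul (2 * s))).add_const 2).congr_deriv ?_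
  push_cast
  ring

theorem pz_pz_quartic : pz (pz quartic) (z, s, E) = 12 * z ^ 2 + 2 * s :=
  (hasDerivAt_pz_quartic_z z s E).deriv

end Quartic

section SquareRootBranch

variable {Ω : Set (ℂ × ℂ × ℂ)} {r : ℂ × ℂ × ℂ → ℂ} (hΩ : IsOpen Ω)
  (hr : DifferentiableOn ℂ r Ω) (hsq : ∀ p ∈ Ω, r p ^ 2 = quartic p) (hr0 : ∀ p ∈ Ω, r p ≠ 0)
include hΩ hr hsq hr0

theorem pE_eqOn : EqOn (pE r) (fun p => r p ^ (-1 : ℤ) / 2) Ω := by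
  rintro ⟨z, s, E⟩ hp
  have h := hasDerivAt_zpow_comp_of_sq_eq hΩ hr hsq (ι := fun w => (z, s, w)) (by fun_prop) hp
    (hr0 _ hp) (hasDerivAt_quartic_E z s E) 1
  simp only [zpow_one] at h
  rw [pE, h.deriv]
  norm_num
  ring

theorem pz_inv_eqOn : EqOn (pz fun p => r p ^ (-1 : ℤ))
    (fun p => -pz quartic p / 2 * r p ^ (-3 : ℤ)) Ω := by
  rintro ⟨z, s, E⟩ hp
  have h := hasDerivAt_zpow_comp_of_sq_eq hΩ hr hsq (ι := fun w => (w, s, E)) (by fun_prop) hp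
    (hr0 _ hp) (hasDerivAt_quartic_z z s E) (-1)
  rw [pz, h.deriv]
  simp only [pz_quartic]
  norm_num
  ring

theorem ps_pE_apply {z s E : ℂ} (hp : (z, s, E) ∈ Ω) :
    ps (pE r) (z, s, E) = -z ^ 2 / 4 * r (z, s, E) ^ (-3 : ℤ) := by
  have h := hasDerivAt_zpow_comp_of_sq_eq hΩ hr hsq (ι := fun w => (z, w, E)) (by fun_prop) hp
    (hr0 _ hp) (hasDerivAt_quartic_s z s E) (-1)
  change deriv (fun w => pE r (z, w, E)) s = _
  rw [deriv_comp_congr_of_eqOn (ι := fun w => (z, w, E)) hΩ (pE_eqOn hΩ hr hsq hr0)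
    (by fun_prop) hp,
    (h.div_const 2).deriv]
  norm_num
  ring

theorem pE_pE_apply {z s E : ℂ} (hp : (z, s, E) ∈ Ω) :
    pE (pE r) (z, s, E) = -1 / 4 * r (z, s, E) ^ (-3 : ℤ) := by
  have h := hasDerivAt_zpow_comp_of_sq_eq hΩ hr hsq (ι := fun w => (z, s, w)) (by fun_prop) hp
    (hr0 _ hp) (hasDerivAt_quartic_E z s E) (-1)
  change deriv (fun w => pE r (z, s, w)) E = _
  rw [deriv_comp_congr_of_eqOn (ι := fun w => (z, s, w)) hΩ (pE_eqOn hΩ hr hsq hr0)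
    (by fun_prop) hp,
    (h.div_const 2).deriv]
  norm_num
  ring

theorem pz_pz_inv_apply {z s E : ℂ} (hp : (z, s, E) ∈ Ω) :
    pz (pz fun p => r p ^ (-1 : ℤ)) (z, s, E) =
      -pz (pz quartic) (z, s, E) / 2 * r (z, s, E) ^ (-3 : ℤ)
        + 3 / 4 * pz quartic (z, s, E) ^ 2 * r (z, s, E) ^ (-5 : ℤ) := by
  have h := hasDerivAt_zpow_comp_of_sq_eq hΩ hr hsq (ι := fun w => (w, s, E)) (by fun_prop) hp
    (hr0 _ hp) (hasDerivAt_quartic_z z s E) (-3)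
  change deriv (fun w => pz (fun p => r p ^ (-1 : ℤ)) (w, s, E)) z = _
  rw [deriv_comp_congr_of_eqOn (ι := fun w => (w, s, E)) hΩ (pz_inv_eqOn hΩ hr hsq hr0)
    (by fun_prop) hp, (((hasDerivAt_pz_quartic_z z s E).fun_neg.div_const 2).fun_mul h).deriv,
    pz_pz_quartic, pz_quartic]
  norm_num
  ring

end SquareRootBranch

/-- for a holomorphic branch r of √Q, Q = z⁴ + s·z² + 2z + E, the WKB
correction S₁ = (4QQ'' − 5(Q')²)/(32Q²·r) satisfies
S₁ = −∂_s∂_E r − (s/6)∂²_E r − (5/24)∂²_z(1/r) on Ω. -/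
theorem wkb_subleading_identity
    (Ω : Set (ℂ × ℂ × ℂ)) (hΩ : IsOpen Ω)
    (r : ℂ × ℂ × ℂ → ℂ) (hr : DifferentiableOn ℂ r Ω)
    (Q : ℂ × ℂ × ℂ → ℂ)
    (hQ : ∀ p : ℂ × ℂ × ℂ, Q p = p.1 ^ 4 + p.2.1 * p.1 ^ 2 + 2 * p.1 + p.2.2)
    (hr2 : ∀ p ∈ Ω, (r p) ^ 2 = Q p)
    (hr0 : ∀ p ∈ Ω, r p ≠ 0) :
    ∀ p ∈ Ω,
      (4 * Q p * pz (pz Q) p - 5 * (pz Q p) ^ 2) / (32 * (Q p) ^ 2 * r p)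
        = -(ps (pE r) p) - (p.2.1 / 6) * pE (pE r) p
          - (5 / 24) * pz (pz (fun q => 1 / r q)) p := by
  obtain rfl : Q = quartic := funext hQ
  have hinv : (fun q => 1 / r q) = fun q => r q ^ (-1 : ℤ) := by
    simp only [one_div, zpow_neg_one]
  rintro ⟨z, s, E⟩ hp
  dsimp only
  rw [hinv, ps_pE_apply hΩ hr hr2 hr0 hp, pE_pE_apply hΩ hr hr2 hr0 hp,
    pz_pz_inv_apply hΩ hr hr2 hr0 hp, pz_pz_quartic, pz_quartic, ← hr2 _ hp]
  have hne := hr0 _ hp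
  simp only [zpow_neg]
  field_simp
  ring
end

section
/- Let t, Λ ∈ ℂ, n ∈ ℕ, and let p be a nonzero polynomial over ℂ such that F(x) := p(x)·exp(θ(x;t)) satisfies F''(x) = (x⁴ + t·x² + 2(n+1)·x + Λ)·F(x) for all x ∈ ℂ. Then the function 1/F² admits a global primitive off the zeros of p: there exists H : ℂ → ℂ such that at every x ∈ ℂ with p(x) ≠ 0, H is differentiable at x with H'(x) = 1/F(x)². (Equivalently, the differential dζ/F(ζ)², whose poles are double poles at the zeros of p, has vanishing residue at every pole, so the second solution G(x) = F(x)·∫ˣ dζ/F(ζ)² of the ODE is single-valued.) -/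
/-!
Write `F = p e^θ`, so that `1 / F² = e^{-2θ} / p²`. The ODE for `F` becomes a polynomial ODE
`p'' + 2θ' p' = A p`, whose solutions have only simple zeros; hence `p` and `p'` are coprime.
Differentiating a Bézout identity `u p + v p' = 1` and using the ODE yields polynomials `v`, `m`
with `v p' - v' p + 2θ' v p + m p² = 1`, which says exactly that
`e^{-2θ} / p² = (-v e^{-2θ} / p)' + m e^{-2θ}`; the last term is entire, so it has a primitive.
-/

open Complex Polynomial

namespace Polynomial

variable {R : Type*} [CommRing R]

theorem derivative_ne_zero_of_isRoot [IsDomain R] [CharZero R] {p : R[X]} {a : R} (hp : p ≠ 0)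
    (ha : p.IsRoot a) : derivative p ≠ 0 := by
  contrapose ha
  rw [eq_C_of_derivative_eq_zero ha] at hp ⊢
  exact not_isRoot_C _ _ (C_ne_zero.mp hp)

/-- Solutions of a second-order linear ODE have only simple zeros: at a zero of order `k ≥ 2`,
`p'' = A p - B p'` would vanish to order `k - 1`, but it vanishes to order exactly `k - 2`. -/
theorem not_isRoot_derivative_of_isRoot_of_ode [IsDomain R] [CharZero R] {p A B : R[X]} {a : R}
    (hp : p ≠ 0) (hode : derivative (derivative p) + B * derivative p = A * p) (ha : p.IsRoot a) :
    ¬ (derivative p).IsRoot a := by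
  intro ha'
  have hp' := derivative_ne_zero_of_isRoot hp ha
  have hp'' := derivative_ne_zero_of_isRoot hp' ha'
  set k := p.rootMultiplicity a
  have hk' : (derivative p).rootMultiplicity a = k - 1 := derivative_rootMultiplicity_of_root ha
  have hk'' : (derivative (derivative p)).rootMultiplicity a = k - 1 - 1 := by
    rw [derivative_rootMultiplicity_of_root ha', hk']
  have hk_pos : 0 < (derivative p).rootMultiplicity a := (rootMultiplicity_pos hp').mpr ha'
  have dvd_p : (X - C a) ^ (k - 1) ∣ p :=
    (pow_dvd_pow _ (Nat.sub_le k 1)).trans (p.pow_rootMultiplicity_dvd a)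
  have dvd_p' : (X - C a) ^ (k - 1) ∣ derivative p :=
    hk' ▸ (derivative p).pow_rootMultiplicity_dvd a
  have dvd_p'' : (X - C a) ^ (k - 1) ∣ derivative (derivative p) := by
    rw [eq_sub_of_add_eq hode]
    exact (dvd_p.mul_left A).sub (dvd_p'.mul_left B)
  have := (le_rootMultiplicity_iff hp'').mpr dvd_p''
  omega

theorem isCoprime_derivative_of_ode {K : Type*} [Field K] [IsAlgClosed K] [CharZero K]
    {p A B : K[X]} (hp : p ≠ 0) (hode : derivative (derivative p) + B * derivative p = A * p) :
    IsCoprime p (derivative p) := by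
  refine (isCoprime_iff_aeval_ne_zero_of_isAlgClosed K K p _).mpr fun a => ?_
  simp only [coe_aeval_eq_eval, or_iff_not_imp_left, not_not]
  exact not_isRoot_derivative_of_isRoot_of_ode hp hode

/-- If `u p + v p' = 1`, differentiating and using the ODE shows `p ∣ u + v' - B v`; writing
`u + v' - B v = m p` turns the Bézout identity into this one. -/
theorem exists_mul_derivative_sub_add_eq_one_of_ode {p A B : R[X]}
    (hco : IsCoprime p (derivative p))
    (hode : derivative (derivative p) + B * derivative p = A * p) :
    ∃ v m : R[X], v * derivative p - derivative v * p + B * v * p + m * p ^ 2 = 1 := by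
  obtain ⟨u, v, huv⟩ := id hco
  have hderiv : derivative u * p + u * derivative p + derivative v * derivative p
      + v * derivative (derivative p) = 0 := by
    have h := congrArg derivative huv
    rw [derivative_add, derivative_mul, derivative_mul, derivative_one] at h
    linear_combination h
  have hdvd : p ∣ (u + derivative v - B * v) * derivative p :=
    ⟨-derivative u - v * A, by linear_combination hderiv - v * hode⟩
  obtain ⟨m, hm⟩ := hco.dvd_of_dvd_mul_right hdvd
  exact ⟨v, m, by linear_combination huv - p * hm⟩

end Polynomial

section QuasiPolynomial

variable {θ : ℂ → ℂ} {φ : ℂ[X]}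

theorem hasDerivAt_eval_mul_exp {x : ℂ} (hθ : HasDerivAt θ (φ.eval x) x) (q : ℂ[X]) :
    HasDerivAt (fun w => q.eval w * exp (θ w)) ((derivative q + φ * q).eval x * exp (θ x)) x := by
  refine ((q.hasDerivAt x).mul hθ.cexp).congr_deriv ?_
  simp only [eval_add, eval_mul]
  ring

theorem deriv_deriv_eval_mul_exp (hθ : ∀ x, HasDerivAt θ (φ.eval x) x) (q : ℂ[X]) (x : ℂ) :
    deriv (deriv fun w => q.eval w * exp (θ w)) x
      = (derivative (derivative q) + 2 * φ * derivative q + (derivative φ + φ ^ 2) * q).eval x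
        * exp (θ x) := by
  have hF : deriv (fun w => q.eval w * exp (θ w))
      = fun w => (derivative q + φ * q).eval w * exp (θ w) :=
    funext fun w => (hasDerivAt_eval_mul_exp (hθ w) q).deriv
  rw [hF, (hasDerivAt_eval_mul_exp (hθ x) _).deriv]
  congr 2
  simp only [derivative_add, derivative_mul]
  ring

theorem ode_of_deriv_deriv_eval_mul_exp {p V : ℂ[X]} (hθ : ∀ x, HasDerivAt θ (φ.eval x) x)
    (hode : ∀ x, deriv (deriv fun w => p.eval w * exp (θ w)) x
      = V.eval x * (p.eval x * exp (θ x))) :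
    derivative (derivative p) + 2 * φ * derivative p = (V - derivative φ - φ ^ 2) * p := by
  refine Polynomial.funext fun x => mul_right_cancel₀ (exp_ne_zero (θ x)) ?_
  have h := (deriv_deriv_eval_mul_exp hθ p x).symm.trans (hode x)
  simp only [eval_add, eval_sub, eval_mul, eval_pow] at h ⊢
  linear_combination h

/-- The primitive is `-(v / p) exp (-2θ) + S`, where `S` is an entire primitive of
`m exp (-2θ)`. -/
theorem exists_hasDerivAt_inv_sq_eval_mul_exp (hθ : ∀ x, HasDerivAt θ (φ.eval x) x)
    {p v m : ℂ[X]} (hvm : v * derivative p - derivative v * p + 2 * φ * v * p + m * p ^ 2 = 1) :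
    ∃ H : ℂ → ℂ, ∀ x, p.eval x ≠ 0 → HasDerivAt H (1 / (p.eval x * exp (θ x)) ^ 2) x := by
  have hE : ∀ x, HasDerivAt (fun w => exp (-2 * θ w)) (exp (-2 * θ x) * (-2 * φ.eval x)) x :=
    fun x => ((hθ x).const_mul (-2)).cexp
  obtain ⟨S, hS⟩ : ∃ S : ℂ → ℂ, ∀ x ∈ Set.univ, HasDerivAt S (m.eval x * exp (-2 * θ x)) x :=
    Differentiable.isExactOn_univ fun x => m.differentiableAt.mul (hE x).differentiableAt
  refine ⟨fun w => -v.eval w / p.eval w * exp (-2 * θ w) + S w, fun x hx => ?_⟩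
  refine ((((v.hasDerivAt x).neg).div (p.hasDerivAt x) hx).mul (hE x)).add
    (hS x (Set.mem_univ x)) |>.congr_deriv ?_
  have hvm_x := congrArg (eval x) hvm
  have hexp : exp (-2 * θ x) = 1 / exp (θ x) ^ 2 := by
    rw [← exp_nat_mul, one_div, ← exp_neg]; push_cast; ring_nf
  simp only [eval_add, eval_sub, eval_mul, eval_pow, eval_one, eval_ofNat] at hvm_x
  simp only [Pi.neg_apply, Pi.div_apply, hexp]
  field_simp
  linear_combination hvm_x

end QuasiPolynomial

/-- for a quasi-polynomial solution F = p·e^θ of the quartic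
anharmonic oscillator ODE, 1/F² admits a global primitive off the zeros of p
(the residues of dζ/F² all vanish). -/
theorem reciprocal_square_has_global_primitive
    (t Λ : ℂ) (n : ℕ) (p : Polynomial ℂ) (hp : p ≠ 0)
    (hode : ∀ x : ℂ,
      deriv (deriv (fun w => p.eval w * Complex.exp (w ^ 3 / 3 + t * w / 2))) x
        = (x ^ 4 + t * x ^ 2 + 2 * ((n : ℂ) + 1) * x + Λ)
          * (p.eval x * Complex.exp (x ^ 3 / 3 + t * x / 2))) :
    ∃ H : ℂ → ℂ, ∀ x : ℂ, p.eval x ≠ 0 →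
      HasDerivAt H (1 / (p.eval x * Complex.exp (x ^ 3 / 3 + t * x / 2)) ^ 2) x := by
  have hθ : ∀ x : ℂ,
      HasDerivAt (fun w => w ^ 3 / 3 + t * w / 2) ((X ^ 2 + C (t / 2)).eval x) x := fun x => by
    refine (((hasDerivAt_pow 3 x).div_const 3).add
      (((hasDerivAt_id x).const_mul t).div_const 2)).congr_deriv ?_
    simp only [eval_add, eval_pow, eval_X, eval_C]
    push_cast
    ring
  have hpoly := ode_of_deriv_deriv_eval_mul_exp hθ
    (V := X ^ 4 + C t * X ^ 2 + C (2 * ((n : ℂ) + 1)) * X + C Λ) fun x => by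
      simpa only [eval_add, eval_mul, eval_pow, eval_X, eval_C] using hode x
  obtain ⟨v, m, hvm⟩ :=
    exists_mul_derivative_sub_add_eq_one_of_ode (isCoprime_derivative_of_ode hp hpoly) hpoly
  exact exists_hasDerivAt_inv_sq_eval_mul_exp hθ hvm
end
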